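/- If a Q-function estimate Q̂ satisfies the Bellman equation for π exactly on a subset D ⊆ S × A that is closed under the transition-plus-policy dynamics (i.e., for every (s,a) ∈ D, every s' with T(s,a)(s') > 0 and every a' with π(a'|s') > 0 satisfies (s',a') ∈ D), then Q̂ = Q^π on D. -/

import Mathlib

/-!
On `D` the error `Qhat - Qpi` satisfies the homogeneous Bellman equation, whose right-hand side
is `γ` times an average of errors at successors of `D`, which lie in `D` again by closedness.
Since `D` is finite, the largest error on `D` is therefore at most `γ` times itself, hence zero.
-/

open Finset

lemma abs_sum_mul_le_of_forall_pos {ι : Type*} [Fintype ι] {w f : ι → ℝ} {M : ℝ}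
    (hw0 : ∀ i, 0 ≤ w i) (hw1 : ∑ i, w i = 1) (hf : ∀ i, 0 < w i → |f i| ≤ M) :
    |∑ i, w i * f i| ≤ M :=
  calc |∑ i, w i * f i| ≤ ∑ i, |w i * f i| := abs_sum_le_sum_abs _ _
    _ ≤ ∑ i, w i * M := by
      refine sum_le_sum fun i _ => ?_
      rw [abs_mul, abs_of_nonneg (hw0 i)]
      rcases (hw0 i).eq_or_lt with hwi | hwi
      · simp [← hwi]
      · exact mul_le_mul_of_nonneg_left (hf i hwi) hwi.le
    _ = M := by rw [← sum_mul, hw1, one_mul]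

lemma eq_zero_on_of_abs_le_mul_bound {α : Type*} {D : Set α} {d : α → ℝ} {γ : ℝ}
    (hD : D.Finite) (hγ : γ < 1)
    (hcontr : ∀ M, (∀ r ∈ D, |d r| ≤ M) → ∀ q ∈ D, |d q| ≤ γ * M) :
    ∀ p ∈ D, d p = 0 := by
  intro p hp
  obtain ⟨m, hm, hmax⟩ := D.exists_max_image (fun q => |d q|) hD ⟨p, hp⟩
  have hm_le : |d m| ≤ γ * |d m| := hcontr _ hmax m hm
  have hm_zero : |d m| ≤ 0 := by nlinarith [abs_nonneg (d m)]
  exact abs_nonpos_iff.mp ((hmax p hp).trans hm_zero)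

section ExpectedNextValue

variable {S A : Type*} [Fintype S] [Fintype A]

def expectedNextValue (T : S → A → S → ℝ) (π : S → A → ℝ) (Q : S × A → ℝ) (p : S × A) : ℝ :=
  ∑ s' : S, T p.1 p.2 s' * ∑ a' : A, π s' a' * Q (s', a')

lemma expectedNextValue_sub (T : S → A → S → ℝ) (π : S → A → ℝ) (Q₁ Q₂ : S × A → ℝ)
    (p : S × A) :
    expectedNextValue T π (Q₁ - Q₂) p =
      expectedNextValue T π Q₁ p - expectedNextValue T π Q₂ p := by
  simp only [expectedNextValue, Pi.sub_apply, mul_sub, sum_sub_distrib]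

lemma abs_expectedNextValue_le {T : S → A → S → ℝ} {π : S → A → ℝ} {Q : S × A → ℝ}
    {p : S × A} {M : ℝ} (hT0 : ∀ s a s', 0 ≤ T s a s') (hT1 : ∀ s a, ∑ s' : S, T s a s' = 1)
    (hπ0 : ∀ s a, 0 ≤ π s a) (hπ1 : ∀ s, ∑ a : A, π s a = 1)
    (hQ : ∀ s' a', 0 < T p.1 p.2 s' → 0 < π s' a' → |Q (s', a')| ≤ M) :
    |expectedNextValue T π Q p| ≤ M :=
  abs_sum_mul_le_of_forall_pos (hT0 _ _) (hT1 _ _) fun s' hT =>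
    abs_sum_mul_le_of_forall_pos (hπ0 s') (hπ1 s') fun a' hπ => hQ s' a' hT hπ

end ExpectedNextValue

/-- If `Q̂` satisfies the Bellman equation for `π` exactly on a set `D` of state-action
pairs that is closed under the transition-plus-policy dynamics, then `Q̂` agrees with
the true action-value `Q^π` on `D`. -/
theorem bellman_exact_on_closed_set {S A : Type*} [Fintype S] [Fintype A]
    (R : S → A → ℝ) (T : S → A → S → ℝ) (γ : ℝ) (π : S → A → ℝ)
    (hγ0 : 0 ≤ γ) (hγ1 : γ < 1)
    (hT0 : ∀ s a s', 0 ≤ T s a s')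
    (hT1 : ∀ s a, ∑ s' : S, T s a s' = 1)
    (hπ0 : ∀ s a, 0 ≤ π s a)
    (hπ1 : ∀ s, ∑ a : A, π s a = 1)
    (Qpi Qhat : S × A → ℝ)
    (hQpi : ∀ s a, Qpi (s, a) =
      R s a + γ * ∑ s' : S, T s a s' * ∑ a' : A, π s' a' * Qpi (s', a'))
    (D : Set (S × A))
    (hclosed : ∀ p ∈ D, ∀ (s' : S) (a' : A),
      0 < T p.1 p.2 s' → 0 < π s' a' → (s', a') ∈ D)
    (hQhat : ∀ p ∈ D, Qhat p =
      R p.1 p.2 + γ * ∑ s' : S, T p.1 p.2 s' * ∑ a' : A, π s' a' * Qhat (s', a')) :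
    ∀ p ∈ D, Qhat p = Qpi p := by
  have hcontr : ∀ M, (∀ r ∈ D, |(Qhat - Qpi) r| ≤ M) →
      ∀ q ∈ D, |(Qhat - Qpi) q| ≤ γ * M := by
    intro M hM q hq
    have herror : (Qhat - Qpi) q = γ * expectedNextValue T π (Qhat - Qpi) q := by
      rw [expectedNextValue_sub, Pi.sub_apply, hQhat q hq, hQpi q.1 q.2]
      simp only [expectedNextValue]
      ring
    rw [herror, abs_mul, abs_of_nonneg hγ0]
    exact mul_le_mul_of_nonneg_left (abs_expectedNextValue_le hT0 hT1 hπ0 hπ1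
      fun s' a' hT hπ => hM _ (hclosed q hq s' a' hT hπ)) hγ0
  exact fun p hp => sub_eq_zero.mp (eq_zero_on_of_abs_le_mul_bound D.toFinite hγ1 hcontr p hp)
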